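/- arXiv:math/0311212 — 2 statements merged into one kernel-verified Lean document; each statement's English description precedes it below -/
import Mathlib

section
/- Let n be a positive integer, a = (a_1,...,a_n) and b = (b_1,...,b_n) be n-tuples of complex numbers with b_k ≠ 0 for all k, and p = (p_1,...,p_n) nonnegative real weights with ∑_{i=1}^n p_i = 1. Suppose there exist α ∈ ℂ and r > 0 with |α| > r such that a_k / conj(b_k) ∈ D̄(α,r) for every k ∈ {1,...,n}. Then (∑_{k=1}^n p_k |a_k|^2)(∑_{k=1}^n p_k |b_k|^2) ≤ (1/(|α|^2 - r^2)) · ( Re[ conj(α) · ∑_{k=1}^n p_k a_k b_k ] )^2 ≤ (|α|^2/(|α|^2 - r^2)) · | ∑_{k=1}^n p_k a_k b_k |^2. -/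
/-! Multiplying `‖a / conj b - α‖ ≤ r` by `‖b‖` and squaring gives, for each `k`,
`|a|² + (|α|² - r²) |b|² ≤ 2 Re(conj α · a b)`. Averaging with the weights `p` yields
`A + c B ≤ 2 R` with `A = ∑ p |a|²`, `B = ∑ p |b|²`, `c = |α|² - r²`, `R = Re(conj α ∑ p a b)`,
and AM-GM `4 c A B ≤ (A + c B)²` gives the first inequality. The second is `|Re z| ≤ |z|`. -/

open Finset ComplexConjugate

namespace Complex

theorem sq_norm_sub_mul_conj (a b α : ℂ) :
    ‖a - α * conj b‖ ^ 2 = ‖a‖ ^ 2 + ‖α‖ ^ 2 * ‖b‖ ^ 2 - 2 * (conj α * (a * b)).re := by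
  simp only [Complex.sq_norm, normSq_sub, normSq_conj, map_mul, conj_conj]
  ring_nf

theorem sq_norm_add_mul_sq_norm_le_two_re {a b α : ℂ} {r : ℝ} (hb : b ≠ 0)
    (h : ‖a / conj b - α‖ ≤ r) :
    ‖a‖ ^ 2 + (‖α‖ ^ 2 - r ^ 2) * ‖b‖ ^ 2 ≤ 2 * (conj α * (a * b)).re := by
  have hbc : conj b ≠ 0 := (map_ne_zero _).mpr hb
  have hdist : ‖a - α * conj b‖ ≤ r * ‖b‖ := by
    calc ‖a - α * conj b‖ = ‖a / conj b - α‖ * ‖b‖ := by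
          rw [← norm_conj b, ← norm_mul, sub_mul, div_mul_cancel₀ _ hbc]
      _ ≤ r * ‖b‖ := by gcongr
  have hsq := pow_le_pow_left₀ (norm_nonneg _) hdist 2
  rw [sq_norm_sub_mul_conj] at hsq
  linarith

theorem sum_sq_norm_add_mul_sum_sq_norm_le_two_re {ι : Type*} (s : Finset ι) {a b : ι → ℂ}
    {p : ι → ℝ} {α : ℂ} {r : ℝ} (hb : ∀ k ∈ s, b k ≠ 0) (hp : ∀ k ∈ s, 0 ≤ p k)
    (h : ∀ k ∈ s, ‖a k / conj (b k) - α‖ ≤ r) :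
    ∑ k ∈ s, p k * ‖a k‖ ^ 2 + (‖α‖ ^ 2 - r ^ 2) * ∑ k ∈ s, p k * ‖b k‖ ^ 2
      ≤ 2 * (conj α * ∑ k ∈ s, (p k : ℂ) * a k * b k).re := by
  have hre : (conj α * ∑ k ∈ s, (p k : ℂ) * a k * b k).re
      = ∑ k ∈ s, p k * (conj α * (a k * b k)).re := by
    simp only [mul_sum, re_sum, ← re_ofReal_mul]
    exact sum_congr rfl fun k _ => congrArg re (by ring)
  rw [hre, mul_sum, mul_sum, ← sum_add_distrib]
  refine sum_le_sum fun k hk => ?_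
  have := mul_le_mul_of_nonneg_left
    (sq_norm_add_mul_sq_norm_le_two_re (hb k hk) (h k hk)) (hp k hk)
  linarith

theorem re_conj_mul_sq_le (α z : ℂ) : (conj α * z).re ^ 2 ≤ ‖α‖ ^ 2 * ‖z‖ ^ 2 := by
  rw [← mul_pow, ← norm_conj α, ← norm_mul, ← sq_abs]
  exact pow_le_pow_left₀ (abs_nonneg _) (abs_re_le_norm _) 2

end Complex

theorem mul_le_one_div_mul_sq_of_add_mul_le {x y c R : ℝ} (hx : 0 ≤ x) (hy : 0 ≤ y)
    (hc : 0 < c) (h : x + c * y ≤ 2 * R) : x * y ≤ 1 / c * R ^ 2 := by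
  have hsq : (x + c * y) ^ 2 ≤ (2 * R) ^ 2 := pow_le_pow_left₀ (by positivity) h 2
  rw [one_div_mul_eq_div, le_div_iff₀ hc]
  nlinarith [sq_nonneg (x - c * y)]

theorem stmt_1_general (n : ℕ) (a b : Fin n → ℂ) (p : Fin n → ℝ)
    (hb : ∀ k, b k ≠ 0) (hp : ∀ k, 0 ≤ p k)
    (α : ℂ) (r : ℝ) (hr : 0 < r) (hαr : r < ‖α‖)
    (h : ∀ k, ‖a k / (starRingEnd ℂ) (b k) - α‖ ≤ r) :
    (∑ k, p k * ‖a k‖ ^ 2) * (∑ k, p k * ‖b k‖ ^ 2)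
      ≤ (1 / (‖α‖ ^ 2 - r ^ 2))
        * ((starRingEnd ℂ) α * ∑ k, (p k : ℂ) * a k * b k).re ^ 2
    ∧ (1 / (‖α‖ ^ 2 - r ^ 2))
        * ((starRingEnd ℂ) α * ∑ k, (p k : ℂ) * a k * b k).re ^ 2
      ≤ (‖α‖ ^ 2 / (‖α‖ ^ 2 - r ^ 2))
        * ‖∑ k, (p k : ℂ) * a k * b k‖ ^ 2 := by
  have hc : 0 < ‖α‖ ^ 2 - r ^ 2 := sub_pos.mpr (pow_lt_pow_left₀ hαr hr.le two_ne_zero)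
  constructor
  · refine mul_le_one_div_mul_sq_of_add_mul_le
      (sum_nonneg fun k _ => mul_nonneg (hp k) (sq_nonneg _))
      (sum_nonneg fun k _ => mul_nonneg (hp k) (sq_nonneg _)) hc ?_
    exact Complex.sum_sq_norm_add_mul_sum_sq_norm_le_two_re univ
      (fun k _ => hb k) (fun k _ => hp k) (fun k _ => h k)
  · calc _ ≤ 1 / (‖α‖ ^ 2 - r ^ 2) * (‖α‖ ^ 2 * ‖∑ k, (p k : ℂ) * a k * b k‖ ^ 2) := by
          gcongr; exact Complex.re_conj_mul_sq_le _ _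
      _ = _ := by ring

theorem stmt_1 (n : ℕ) (hn : 0 < n) (a b : Fin n → ℂ) (p : Fin n → ℝ)
    (hb : ∀ k, b k ≠ 0) (hp : ∀ k, 0 ≤ p k) (hp1 : ∑ i, p i = 1)
    (α : ℂ) (r : ℝ) (hr : 0 < r) (hαr : r < ‖α‖)
    (h : ∀ k, ‖a k / (starRingEnd ℂ) (b k) - α‖ ≤ r) :
    (∑ k, p k * ‖a k‖ ^ 2) * (∑ k, p k * ‖b k‖ ^ 2)
      ≤ (1 / (‖α‖ ^ 2 - r ^ 2))
        * ((starRingEnd ℂ) α * ∑ k, (p k : ℂ) * a k * b k).re ^ 2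
    ∧ (1 / (‖α‖ ^ 2 - r ^ 2))
        * ((starRingEnd ℂ) α * ∑ k, (p k : ℂ) * a k * b k).re ^ 2
      ≤ (‖α‖ ^ 2 / (‖α‖ ^ 2 - r ^ 2))
        * ‖∑ k, (p k : ℂ) * a k * b k‖ ^ 2 :=
  stmt_1_general n a b p hb hp α r hr hαr h
end

section
/- Let n be a positive integer, a = (a_1,...,a_n) and b = (b_1,...,b_n) be n-tuples of complex numbers with b_k ≠ 0 for all k, and p = (p_1,...,p_n) nonnegative real weights with ∑_{i=1}^n p_i = 1. Suppose there exist α ∈ ℂ and r > 0 with r > |α| such that a_k / conj(b_k) ∈ D̄(α,r) for every k ∈ {1,...,n}. Then ∑_{k=1}^n p_k |a_k|^2 ≤ (r^2 - |α|^2) ∑_{k=1}^n p_k |b_k|^2 + 2 Re[ conj(α) · ∑_{k=1}^n p_k a_k b_k ] ≤ (r^2 - |α|^2) ∑_{k=1}^n p_k |b_k|^2 + 2 |α| · | ∑_{k=1}^n p_k a_k b_k |. -/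
/-! Multiplying the disk condition by `|b_k|` gives `|a_k - α conj(b_k)| ≤ r |b_k|`; expanding the
square yields the first inequality for each `k` separately, and averaging with the weights `p_k`
gives it in general. The second inequality is `Re z ≤ |z|`. -/

open ComplexConjugate

namespace Complex

lemma norm_sub_mul_conj_sq (a b α : ℂ) :
    ‖a - α * conj b‖ ^ 2 = ‖a‖ ^ 2 - 2 * (conj α * (a * b)).re + ‖α‖ ^ 2 * ‖b‖ ^ 2 := by
  simp only [Complex.sq_norm, normSq_sub, normSq_conj, map_mul, conj_conj]
  ring_nf

lemma norm_sub_mul_conj_le_of_norm_div_conj_sub_le {a b α : ℂ} {r : ℝ} (hb : b ≠ 0)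
    (h : ‖a / conj b - α‖ ≤ r) : ‖a - α * conj b‖ ≤ r * ‖b‖ := by
  have hb' : conj b ≠ 0 := (map_ne_zero _).mpr hb
  calc ‖a - α * conj b‖ = ‖a / conj b - α‖ * ‖b‖ := by
        rw [← norm_conj b, ← norm_mul, sub_mul, div_mul_cancel₀ _ hb']
    _ ≤ r * ‖b‖ := by gcongr

lemma norm_sq_le_of_norm_sub_mul_conj_le {a b α : ℂ} {r : ℝ} (h : ‖a - α * conj b‖ ≤ r * ‖b‖) :
    ‖a‖ ^ 2 ≤ (r ^ 2 - ‖α‖ ^ 2) * ‖b‖ ^ 2 + 2 * (conj α * (a * b)).re := by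
  have hsq : ‖a - α * conj b‖ ^ 2 ≤ (r * ‖b‖) ^ 2 := pow_le_pow_left₀ (norm_nonneg _) h 2
  rw [norm_sub_mul_conj_sq] at hsq
  linarith

lemma re_conj_mul_le_norm_mul_norm (α z : ℂ) : (conj α * z).re ≤ ‖α‖ * ‖z‖ := by
  simpa using re_le_norm (conj α * z)

end Complex

open Complex

lemma sum_weighted_norm_sq_le {ι : Type*} [Fintype ι] (a b : ι → ℂ) (p : ι → ℝ)
    (hp : ∀ k, 0 ≤ p k) (α : ℂ) (r : ℝ)
    (h : ∀ k, ‖a k‖ ^ 2 ≤ (r ^ 2 - ‖α‖ ^ 2) * ‖b k‖ ^ 2 + 2 * (conj α * (a k * b k)).re) :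
    ∑ k, p k * ‖a k‖ ^ 2
      ≤ (r ^ 2 - ‖α‖ ^ 2) * ∑ k, p k * ‖b k‖ ^ 2
        + 2 * (conj α * ∑ k, (p k : ℂ) * a k * b k).re := by
  calc ∑ k, p k * ‖a k‖ ^ 2
      ≤ ∑ k, p k * ((r ^ 2 - ‖α‖ ^ 2) * ‖b k‖ ^ 2 + 2 * (conj α * (a k * b k)).re) :=
        Finset.sum_le_sum fun k _ => mul_le_mul_of_nonneg_left (h k) (hp k)
    _ = (r ^ 2 - ‖α‖ ^ 2) * ∑ k, p k * ‖b k‖ ^ 2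
          + 2 * (conj α * ∑ k, (p k : ℂ) * a k * b k).re := by
        simp only [Finset.mul_sum, re_sum, ← Finset.sum_add_distrib]
        refine Finset.sum_congr rfl fun k _ => ?_
        rw [show conj α * ((p k : ℂ) * a k * b k) = (p k : ℂ) * (conj α * (a k * b k)) by ring,
          re_ofReal_mul]
        ring

theorem stmt_4_general (n : ℕ) (a b : Fin n → ℂ) (p : Fin n → ℝ)
    (hb : ∀ k, b k ≠ 0) (hp : ∀ k, 0 ≤ p k)
    (α : ℂ) (r : ℝ)
    (h : ∀ k, ‖a k / (starRingEnd ℂ) (b k) - α‖ ≤ r) :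
    ∑ k, p k * ‖a k‖ ^ 2
      ≤ (r ^ 2 - ‖α‖ ^ 2) * ∑ k, p k * ‖b k‖ ^ 2
        + 2 * ((starRingEnd ℂ) α * ∑ k, (p k : ℂ) * a k * b k).re
    ∧ (r ^ 2 - ‖α‖ ^ 2) * ∑ k, p k * ‖b k‖ ^ 2
        + 2 * ((starRingEnd ℂ) α * ∑ k, (p k : ℂ) * a k * b k).re
      ≤ (r ^ 2 - ‖α‖ ^ 2) * ∑ k, p k * ‖b k‖ ^ 2
        + 2 * ‖α‖ * ‖∑ k, (p k : ℂ) * a k * b k‖ := by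
  refine ⟨sum_weighted_norm_sq_le a b p hp α r fun k => ?_, ?_⟩
  · exact norm_sq_le_of_norm_sub_mul_conj_le
      (norm_sub_mul_conj_le_of_norm_div_conj_sub_le (hb k) (h k))
  · have := re_conj_mul_le_norm_mul_norm α (∑ k, (p k : ℂ) * a k * b k)
    linarith

theorem stmt_4 (n : ℕ) (hn : 0 < n) (a b : Fin n → ℂ) (p : Fin n → ℝ)
    (hb : ∀ k, b k ≠ 0) (hp : ∀ k, 0 ≤ p k) (hp1 : ∑ i, p i = 1)
    (α : ℂ) (r : ℝ) (hr : 0 < r) (hαr : ‖α‖ < r)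
    (h : ∀ k, ‖a k / (starRingEnd ℂ) (b k) - α‖ ≤ r) :
    ∑ k, p k * ‖a k‖ ^ 2
      ≤ (r ^ 2 - ‖α‖ ^ 2) * ∑ k, p k * ‖b k‖ ^ 2
        + 2 * ((starRingEnd ℂ) α * ∑ k, (p k : ℂ) * a k * b k).re
    ∧ (r ^ 2 - ‖α‖ ^ 2) * ∑ k, p k * ‖b k‖ ^ 2
        + 2 * ((starRingEnd ℂ) α * ∑ k, (p k : ℂ) * a k * b k).re
      ≤ (r ^ 2 - ‖α‖ ^ 2) * ∑ k, p k * ‖b k‖ ^ 2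
        + 2 * ‖α‖ * ‖∑ k, (p k : ℂ) * a k * b k‖ :=
  stmt_4_general n a b p hb hp α r h
end
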